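/- arXiv:2503.17397 — 2 statements merged into one kernel-verified Lean document; each statement's English description precedes it below -/
import Mathlib

section
/- For all p, q ∈ [1/4, 1/2], the relative entropy satisfies H_q(p) ≤ H_q(1/2 − p). -/
noncomputable def bernKL (q p : ℝ) : ℝ :=
  p * Real.log (p / q) + (1 - p) * Real.log ((1 - p) / (1 - q))

noncomputable def auxF (p : ℝ) : ℝ :=
  (1/2 - p) * Real.log (1/2 - p) + (1/2 + p) * Real.log (1/2 + p)
    - p * Real.log p - (1 - p) * Real.log (1 - p) - (2*p - 1/2) * Real.log 3

lemma auxF_hasDerivAt {p : ℝ} (hp : p ∈ Set.Ioo (1/4 : ℝ) (1/2)) :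
    HasDerivAt auxF (Real.log (1/2 + p) + Real.log (1 - p) - Real.log (1/2 - p)
      - Real.log p - 2 * Real.log 3) p := by
  obtain ⟨h1, h2⟩ := hp
  have hs : (0:ℝ) < 1/2 - p := by linarith
  have hp0 : (0:ℝ) < p := by linarith
  have h1p : (0:ℝ) < 1 - p := by linarith
  have h12p : (0:ℝ) < 1/2 + p := by linarith
  have d1 : HasDerivAt (fun p : ℝ => 1/2 - p) (-1) p := by
    simpa using (hasDerivAt_id p).const_sub (1/2 : ℝ)
  have d2 : HasDerivAt (fun p : ℝ => 1/2 + p) 1 p := by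
    simpa using (hasDerivAt_id p).const_add (1/2 : ℝ)
  have d4 : HasDerivAt (fun p : ℝ => 1 - p) (-1) p := by
    simpa using (hasDerivAt_id p).const_sub (1 : ℝ)
  have t1 : HasDerivAt (fun p : ℝ => (1/2 - p) * Real.log (1/2 - p))
      ((Real.log (1/2 - p) + 1) * (-1)) p :=
    (Real.hasDerivAt_mul_log hs.ne').comp p d1
  have t2 : HasDerivAt (fun p : ℝ => (1/2 + p) * Real.log (1/2 + p))
      ((Real.log (1/2 + p) + 1) * 1) p :=
    (Real.hasDerivAt_mul_log h12p.ne').comp p d2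
  have t3 : HasDerivAt (fun p : ℝ => p * Real.log p) (Real.log p + 1) p :=
    Real.hasDerivAt_mul_log hp0.ne'
  have t4 : HasDerivAt (fun p : ℝ => (1 - p) * Real.log (1 - p))
      ((Real.log (1 - p) + 1) * (-1)) p :=
    (Real.hasDerivAt_mul_log h1p.ne').comp p d4
  have t5 : HasDerivAt (fun p : ℝ => (2*p - 1/2) * Real.log 3) (2 * Real.log 3) p := by
    have : HasDerivAt (fun p : ℝ => 2*p - 1/2) 2 p := by
      simpa using ((hasDerivAt_id p).const_mul (2:ℝ)).sub_const (1/2 : ℝ)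
    simpa using this.mul_const (Real.log 3)
  have := ((((t1.add t2).sub t3).sub t4).sub t5)
  convert this using 1
  · rfl
  · rfl
  · rfl
  ring

lemma auxF_nonneg {p : ℝ} (hp : p ∈ Set.Icc (1/4 : ℝ) (1/2)) : 0 ≤ auxF p := by
  have hmono : MonotoneOn auxF (Set.Icc (1/4 : ℝ) (1/2)) := by
    have hcont : ContinuousOn auxF (Set.Icc (1/4 : ℝ) (1/2)) := by
      have h : Continuous fun x : ℝ => x * Real.log x := Real.continuous_mul_log
      have c1 : Continuous fun p : ℝ => (1/2 - p) * Real.log (1/2 - p) :=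
        h.comp (continuous_const.sub continuous_id)
      have c2 : Continuous fun p : ℝ => (1/2 + p) * Real.log (1/2 + p) :=
        h.comp (continuous_const.add continuous_id)
      have c4 : Continuous fun p : ℝ => (1 - p) * Real.log (1 - p) :=
        h.comp (continuous_const.sub continuous_id)
      have c5 : Continuous fun p : ℝ => (2*p - 1/2) * Real.log 3 :=
        ((continuous_const.mul continuous_id).sub continuous_const).mul continuous_const
      have : Continuous auxF := ((((c1.add c2).sub h).sub c4).sub c5)
      exact this.continuousOn
    have hderiv : ∀ x ∈ interior (Set.Icc (1/4 : ℝ) (1/2)), 0 ≤ deriv auxF x := by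
      intro x hx
      rw [interior_Icc] at hx
      rw [(auxF_hasDerivAt hx).deriv]
      obtain ⟨h1, h2⟩ := hx
      have hs : (0:ℝ) < 1/2 - x := by linarith
      have hx0 : (0:ℝ) < x := by linarith
      have key : Real.log ((1/2 - x) * x * 9) ≤ Real.log ((1/2 + x) * (1 - x)) := by
        apply Real.log_le_log (by positivity)
        nlinarith [sq_nonneg (4*x - 1)]
      have e1 : Real.log ((1/2 - x) * x * 9) =
          Real.log (1/2 - x) + Real.log x + 2 * Real.log 3 := by
        rw [Real.log_mul (by positivity) (by norm_num), Real.log_mul hs.ne' hx0.ne']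
        have : Real.log (9:ℝ) = 2 * Real.log 3 := by
          rw [show (9:ℝ) = 3^2 by norm_num, Real.log_pow]; push_cast; ring
        rw [this]
      have e2 : Real.log ((1/2 + x) * (1 - x)) = Real.log (1/2 + x) + Real.log (1 - x) := by
        rw [Real.log_mul (by linarith) (by linarith)]
      rw [e1, e2] at key
      linarith
    have hdiff : DifferentiableOn ℝ auxF (interior (Set.Icc (1/4 : ℝ) (1/2))) := by
      intro x hx
      rw [interior_Icc] at hx
      exact (auxF_hasDerivAt hx).differentiableAt.differentiableWithinAt
    exact monotoneOn_of_deriv_nonneg (convex_Icc _ _) hcont hdiff hderiv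
  have h0 : auxF (1/4 : ℝ) = 0 := by
    unfold auxF
    norm_num
  have := hmono (Set.left_mem_Icc.mpr (by norm_num)) hp hp.1
  linarith

lemma mul_log_div_eq {s q : ℝ} (hs : 0 ≤ s) (hq : 0 < q) :
    s * Real.log (s / q) = s * Real.log s - s * Real.log q := by
  rcases eq_or_lt_of_le hs with h | h
  · simp [← h]
  · rw [Real.log_div h.ne' hq.ne']; ring

theorem stmt_2 (p q : ℝ) (hp : p ∈ Set.Icc (1/4 : ℝ) (1/2))
    (hq : q ∈ Set.Icc (1/4 : ℝ) (1/2)) :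
    bernKL q p ≤ bernKL q (1/2 - p) := by
  obtain ⟨hp1, hp2⟩ := hp
  obtain ⟨hq1, hq2⟩ := hq
  have hq0 : (0:ℝ) < q := by linarith
  have hq1' : (0:ℝ) < 1 - q := by linarith
  have hp0 : (0:ℝ) < p := by linarith
  have hs0 : (0:ℝ) ≤ 1/2 - p := by linarith
  have h1s : (0:ℝ) < 1 - (1/2 - p) := by linarith
  have h1p : (0:ℝ) < 1 - p := by linarith
  have e1 : bernKL q p = p * Real.log p - p * Real.log q
      + ((1 - p) * Real.log (1 - p) - (1 - p) * Real.log (1 - q)) := by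
    unfold bernKL
    rw [mul_log_div_eq hp0.le hq0, mul_log_div_eq h1p.le hq1']
  have e2 : bernKL q (1/2 - p) = (1/2 - p) * Real.log (1/2 - p) - (1/2 - p) * Real.log q
      + ((1 - (1/2 - p)) * Real.log (1 - (1/2 - p)) - (1 - (1/2 - p)) * Real.log (1 - q)) := by
    unfold bernKL
    rw [mul_log_div_eq hs0 hq0, mul_log_div_eq h1s.le hq1']
  have hFp : 0 ≤ auxF p := auxF_nonneg ⟨hp1, hp2⟩
  have hlog3 : 0 ≤ Real.log 3 + Real.log q - Real.log (1 - q) := by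
    have : Real.log (1 - q) ≤ Real.log (3 * q) := by
      apply Real.log_le_log hq1'
      linarith
    rw [Real.log_mul (by norm_num) hq0.ne'] at this
    linarith
  have hcoef : 0 ≤ 2*p - 1/2 := by linarith
  have hprod : 0 ≤ (2*p - 1/2) * (Real.log 3 + Real.log q - Real.log (1 - q)) :=
    mul_nonneg hcoef hlog3
  have key : bernKL q (1/2 - p) - bernKL q p
      = auxF p + (2*p - 1/2) * (Real.log 3 + Real.log q - Real.log (1 - q)) := by
    rw [e1, e2]
    unfold auxF
    have : (1 : ℝ) - (1/2 - p) = 1/2 + p := by ring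
    rw [this]
    ring
  linarith
end

section
/- Let k ≥ 3 and suppose the local minima l₀ < l₁ < ... < l_N and maxima k₁ < ... < k_N satisfy l₀ ∈ {0,1} and l_{i−1} + 1 = k_i = l_i − 1 for all i ≥ 1, with the blocks covering {0,...,k} (so k_i = 2i−1, l_i = 2i if l₀ = 0, and k_i = 2i, l_i = 2i+1 if l₀ = 1). Then q₂ = 2^{1−k} · Σ_{i=1}^{N} (k_i(k−k_i)/(k(k−1))) · Σ_{j=l_{i−1}}^{l_i−1} C(k−1, j) = 1/4. In particular, using Σ_{j=l_{i−1}}^{l_i−1} C(k−1,j) = C(k−1,l_{i−1}) + C(k−1,l_{i−1}+1) = C(k, l_{i−1}+1), the sum reduces to 2^{1−k}·Σ_{i=0}^{k−3} C(k−3, i) = 1/4. -/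
open Finset

private lemma key_nat (n m : ℕ) (h : m ≤ n + 1) :
    (m + 1) * ((n + 2) - m) * Nat.choose (n + 3) (m + 1)
      = (n + 3) * ((n + 2) * Nat.choose (n + 1) m) := by
  have e1 : (n + 3) * Nat.choose (n + 2) m = Nat.choose (n + 3) (m + 1) * (m + 1) :=
    Nat.add_one_mul_choose_eq (n + 2) m
  have e2 : Nat.choose (n + 1) m * (n + 2) = Nat.choose (n + 2) m * ((n + 2) - m) :=
    Nat.choose_mul_succ_eq (n + 1) m
  zify [show m ≤ n + 2 by omega] at e1 e2 ⊢
  linear_combination (-(n : ℤ) - 2 + m) * e1 + (-(n : ℤ) - 3) * e2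

private lemma alt_sum (n : ℕ) (hn : 1 ≤ n) :
    ∑ j ∈ range (n + 1), (-1 : ℝ) ^ j * (Nat.choose n j : ℝ) = 0 := by
  have h := Int.alternating_sum_range_choose (n := n)
  rw [if_neg (by omega)] at h
  have h2 := congrArg (fun z : ℤ => (z : ℝ)) h
  push_cast at h2
  exact h2

private lemma full_sum (n : ℕ) :
    ∑ j ∈ range (n + 1), (Nat.choose n j : ℝ) = 2 ^ n := by
  exact_mod_cast congrArg (fun z : ℕ => (z : ℝ)) (Nat.sum_range_choose n)

private lemma even_filter_sum (n : ℕ) (hn : 1 ≤ n) :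
    ∑ j ∈ (range (n + 1)).filter (fun j => Even j), (Nat.choose n j : ℝ) = 2 ^ (n - 1) := by
  rw [Finset.sum_filter]
  have key : ∀ j, (if Even j then (Nat.choose n j : ℝ) else 0)
      = ((Nat.choose n j : ℝ) + (-1) ^ j * (Nat.choose n j : ℝ)) / 2 := by
    intro j
    rcases Nat.even_or_odd j with h | h
    · rw [if_pos h, h.neg_one_pow]; ring
    · rw [if_neg (Nat.not_even_iff_odd.mpr h), h.neg_one_pow]; ring
  simp_rw [key]
  rw [← Finset.sum_div, Finset.sum_add_distrib, full_sum, alt_sum n hn]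
  have h2 : (2 : ℝ) ^ n = 2 ^ (n - 1) * 2 := by
    rw [← pow_succ]; congr 1; omega
  rw [h2]; ring

private lemma odd_filter_sum (n : ℕ) (hn : 1 ≤ n) :
    ∑ j ∈ (range (n + 1)).filter (fun j => ¬ Even j), (Nat.choose n j : ℝ) = 2 ^ (n - 1) := by
  have h := Finset.sum_filter_add_sum_filter_not (range (n + 1)) (fun j => Even j)
    (fun j => (Nat.choose n j : ℝ))
  rw [even_filter_sum n hn, full_sum] at h
  have h2 : (2 : ℝ) ^ n = 2 ^ (n - 1) * 2 := by
    rw [← pow_succ]; congr 1; omega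
  linarith [h, h2]

private lemma even_sum (n : ℕ) (hn : 1 ≤ n) :
    ∑ i ∈ range (n / 2 + 1), (Nat.choose n (2 * i) : ℝ) = 2 ^ (n - 1) := by
  rw [← even_filter_sum n hn]
  refine Finset.sum_nbij' (fun i => 2 * i) (fun j => j / 2) ?_ ?_ ?_ ?_ ?_
  · intro a ha
    simp only [mem_range] at ha
    simp only [mem_filter, mem_range, Nat.even_iff]
    omega
  · intro a ha
    simp only [mem_filter, mem_range, Nat.even_iff] at ha
    simp only [mem_range]
    omega
  · intro a _; omega
  · intro a ha
    simp only [mem_filter, mem_range, Nat.even_iff] at ha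
    omega
  · intro a _; rfl

private lemma odd_sum (n : ℕ) (hn : 1 ≤ n) :
    ∑ i ∈ range ((n + 1) / 2), (Nat.choose n (2 * i + 1) : ℝ) = 2 ^ (n - 1) := by
  rw [← odd_filter_sum n hn]
  refine Finset.sum_nbij' (fun i => 2 * i + 1) (fun j => j / 2) ?_ ?_ ?_ ?_ ?_
  · intro a ha
    simp only [mem_range] at ha
    simp only [mem_filter, mem_range, Nat.even_iff]
    omega
  · intro a ha
    simp only [mem_filter, mem_range, Nat.even_iff] at ha
    simp only [mem_range]
    omega
  · intro a _; omega
  · intro a ha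
    simp only [mem_filter, mem_range, Nat.even_iff] at ha
    omega
  · intro a _; rfl

private lemma zpow_fact (k : ℕ) (hk : 3 ≤ k) :
    (2 : ℝ) ^ ((1 : ℤ) - k) * 2 ^ (k - 3 + 2) = 1 := by
  have h1 : (2 : ℝ) ^ ((1 : ℤ) - k) = 2 / 2 ^ k := by
    rw [zpow_sub₀ (by norm_num : (2:ℝ) ≠ 0), zpow_one, zpow_natCast]
  have h2 : (2 : ℝ) ^ k = 2 ^ (k - 3 + 2) * 2 := by
    rw [← pow_succ]; congr 1; omega
  rw [h1, h2]
  have h3 : (2 : ℝ) ^ (k - 3 + 2) ≠ 0 := by positivity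
  field_simp

open Finset in
/-- For alternating 'ridge' functions of unitation (local minima `l₀ ∈ {0,1}` and
`l_{i-1} + 1 = k_i = l_i - 1`), the dependent-pair probability
`q₂ = 2^{1-k} Σᵢ (kᵢ(k-kᵢ)/(k(k-1))) Σ_{j=l_{i-1}}^{l_i-1} C(k-1,j)` equals `1/4`;
moreover the sum reduces to `2^{1-k} Σ_{i=0}^{k-3} C(k-3,i) = 1/4`. -/
theorem stmt_19 (k : ℕ) (hk : 3 ≤ k) :
    -- case `l₀ = 0`: `kᵢ = 2i - 1`, `lᵢ = 2i`, `N = ⌊k/2⌋`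
    ((2:ℝ)^((1:ℤ) - k) *
        ∑ i ∈ Icc 1 (k / 2),
          ((2 * (i:ℝ) - 1) * ((k:ℝ) - (2 * (i:ℝ) - 1)) / ((k:ℝ) * ((k:ℝ) - 1))) *
            ∑ j ∈ Icc (2*i - 2) (2*i - 1), (Nat.choose (k - 1) j : ℝ) = 1/4) ∧
    -- case `l₀ = 1`: `kᵢ = 2i`, `lᵢ = 2i + 1`, `N = ⌈k/2⌉ - 1`
    ((2:ℝ)^((1:ℤ) - k) *
        ∑ i ∈ Icc 1 ((k + 1) / 2 - 1),
          ((2 * (i:ℝ)) * ((k:ℝ) - 2 * (i:ℝ)) / ((k:ℝ) * ((k:ℝ) - 1))) *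
            ∑ j ∈ Icc (2*i - 1) (2*i), (Nat.choose (k - 1) j : ℝ) = 1/4) ∧
    -- the reduced form
    ((2:ℝ)^((1:ℤ) - k) * ∑ i ∈ Finset.range (k - 2), (Nat.choose (k - 3) i : ℝ) = 1/4) := by
  obtain ⟨k', rfl⟩ : ∃ k', k = k' + 3 := ⟨k - 3, by omega⟩
  have hk'0 : (0:ℝ) ≤ (k' : ℝ) := Nat.cast_nonneg _
  have hden : ((k':ℝ) + 3) * (((k':ℝ) + 3) - 1) ≠ 0 := by nlinarith
  have hA := zpow_fact (k' + 3) (by omega)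
  rw [show k' + 3 - 3 + 2 = k' + 2 by omega, pow_add] at hA
  refine ⟨?_, ?_, ?_⟩
  · -- case l₀ = 0
    have hsum : ∑ i ∈ Icc 1 ((k' + 3) / 2),
        ((2 * (i:ℝ) - 1) * (((k' + 3 : ℕ):ℝ) - (2 * (i:ℝ) - 1)) / (((k' + 3 : ℕ):ℝ) * (((k' + 3 : ℕ):ℝ) - 1))) *
          ∑ j ∈ Icc (2*i - 2) (2*i - 1), (Nat.choose ((k' + 3) - 1) j : ℝ)
        = ∑ i ∈ Icc 1 ((k' + 3) / 2), (Nat.choose (k' + 1) (2 * i - 2) : ℝ) := by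
      refine Finset.sum_congr rfl ?_
      intro i hi
      rw [Finset.mem_Icc] at hi
      obtain ⟨hi1, hi2⟩ := hi
      obtain ⟨i', rfl⟩ : ∃ i', i = i' + 1 := ⟨i - 1, by omega⟩
      rw [show 2 * (i' + 1) - 2 = 2 * i' by omega, show 2 * (i' + 1) - 1 = 2 * i' + 1 by omega,
        Finset.sum_Icc_succ_top (by omega), Finset.Icc_self, Finset.sum_singleton,
        show k' + 3 - 1 = k' + 2 by omega]
      have hp : Nat.choose (k' + 3) (2 * i' + 1)
          = Nat.choose (k' + 2) (2 * i') + Nat.choose (k' + 2) (2 * i' + 1) :=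
        Nat.choose_succ_succ (k' + 2) (2 * i')
      have hpascal : (Nat.choose (k' + 2) (2 * i') : ℝ) + (Nat.choose (k' + 2) (2 * i' + 1) : ℝ)
          = (Nat.choose (k' + 3) (2 * i' + 1) : ℝ) := by rw [hp]; push_cast; ring
      rw [hpascal]
      have hkey := key_nat k' (2 * i') (by omega)
      zify [show 2 * i' ≤ k' + 2 by omega, show 2 * i' ≤ k' + 1 by omega] at hkey
      have hkeyR := congrArg (fun z : ℤ => (z : ℝ)) hkey
      push_cast at hkeyR
      push_cast
      rw [div_mul_eq_mul_div, div_eq_iff hden]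
      linear_combination hkeyR
    rw [hsum]
    have hre : ∑ i ∈ Icc 1 ((k' + 3) / 2), (Nat.choose (k' + 1) (2 * i - 2) : ℝ)
        = ∑ i ∈ range ((k' + 1) / 2 + 1), (Nat.choose (k' + 1) (2 * i) : ℝ) := by
      refine Finset.sum_nbij' (fun i => i - 1) (fun i => i + 1) ?_ ?_ ?_ ?_ ?_
      · intro a ha; rw [mem_Icc] at ha; rw [mem_range]; omega
      · intro a ha; rw [mem_range] at ha; rw [mem_Icc]; omega
      · intro a ha; rw [mem_Icc] at ha; omega
      · intro a _; omega
      · intro a ha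
        rw [mem_Icc] at ha
        rw [show 2 * a - 2 = 2 * (a - 1) by omega]
    rw [hre, even_sum (k' + 1) (by omega), show k' + 1 - 1 = k' by omega]
    linear_combination hA / 4
  · -- case l₀ = 1
    have hsum : ∑ i ∈ Icc 1 ((k' + 3 + 1) / 2 - 1),
        ((2 * (i:ℝ)) * (((k' + 3 : ℕ):ℝ) - 2 * (i:ℝ)) / (((k' + 3 : ℕ):ℝ) * (((k' + 3 : ℕ):ℝ) - 1))) *
          ∑ j ∈ Icc (2*i - 1) (2*i), (Nat.choose ((k' + 3) - 1) j : ℝ)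
        = ∑ i ∈ Icc 1 ((k' + 3 + 1) / 2 - 1), (Nat.choose (k' + 1) (2 * i - 1) : ℝ) := by
      refine Finset.sum_congr rfl ?_
      intro i hi
      rw [Finset.mem_Icc] at hi
      obtain ⟨hi1, hi2⟩ := hi
      obtain ⟨i', rfl⟩ : ∃ i', i = i' + 1 := ⟨i - 1, by omega⟩
      rw [show 2 * (i' + 1) - 1 = 2 * i' + 1 by omega, show 2 * (i' + 1) = 2 * i' + 1 + 1 by omega,
        Finset.sum_Icc_succ_top (by omega), Finset.Icc_self, Finset.sum_singleton,
        show k' + 3 - 1 = k' + 2 by omega]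
      have hp : Nat.choose (k' + 3) (2 * i' + 1 + 1)
          = Nat.choose (k' + 2) (2 * i' + 1) + Nat.choose (k' + 2) (2 * i' + 1 + 1) :=
        Nat.choose_succ_succ (k' + 2) (2 * i' + 1)
      have hpascal : (Nat.choose (k' + 2) (2 * i' + 1) : ℝ) + (Nat.choose (k' + 2) (2 * i' + 1 + 1) : ℝ)
          = (Nat.choose (k' + 3) (2 * i' + 1 + 1) : ℝ) := by rw [hp]; push_cast; ring
      rw [hpascal]
      have hkey := key_nat k' (2 * i' + 1) (by omega)
      zify [show 2 * i' + 1 ≤ k' + 2 by omega, show 2 * i' ≤ k' + 1 by omega] at hkey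
      have hkeyR := congrArg (fun z : ℤ => (z : ℝ)) hkey
      push_cast at hkeyR
      push_cast
      rw [div_mul_eq_mul_div, div_eq_iff hden]
      linear_combination hkeyR
    rw [hsum]
    have hre : ∑ i ∈ Icc 1 ((k' + 3 + 1) / 2 - 1), (Nat.choose (k' + 1) (2 * i - 1) : ℝ)
        = ∑ i ∈ range ((k' + 1 + 1) / 2), (Nat.choose (k' + 1) (2 * i + 1) : ℝ) := by
      refine Finset.sum_nbij' (fun i => i - 1) (fun i => i + 1) ?_ ?_ ?_ ?_ ?_
      · intro a ha; rw [mem_Icc] at ha; rw [mem_range]; omega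
      · intro a ha; rw [mem_range] at ha; rw [mem_Icc]; omega
      · intro a ha; rw [mem_Icc] at ha; omega
      · intro a _; omega
      · intro a ha
        rw [mem_Icc] at ha
        rw [show 2 * a - 1 = 2 * (a - 1) + 1 by omega]
    rw [hre, odd_sum (k' + 1) (by omega), show k' + 1 - 1 = k' by omega]
    linear_combination hA / 4
  · -- reduced form
    rw [show k' + 3 - 2 = k' + 1 by omega, show k' + 3 - 3 = k' by omega, full_sum k']
    linear_combination hA / 4
end
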